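/- Let 𝒢 be a temporal graph with vertex set V, lifetime Λ, snapshots G_t, and VIM sequence (F_t) with F_0 = F_1. Consider (1,X)-states with label set X = {visited, unvisited, current} and a single counter h. The initial states are, for each vertex v ∈ F_0, the state labelling v current, labelling every other vertex unvisited, and with h = 1. Define Tr((l_1, h_1), (l_2, h_2), G) to hold for a static graph G on V if and only if either (a) the set of current-labelled vertices of l_1 minus that of l_2 is a single vertex c_1, the set of current-labelled vertices of l_2 minus that of l_1 is a single vertex c_2, c_1c_2 is an edge of G, c_2 is labelled unvisited by l_1, h_2 = h_1 + 1, and the visited set of l_2 equals the visited set of l_1 together with c_1 (all other vertices being labelled identically), or (b) (l_1, h_1) = (l_2, h_2). Say a sequence of states s_0, …, s_t corresponds to a strict temporal path P beginning on a vertex of F_0 if: s_0 is an initial state; Tr(s_{i−1}, s_i, G_i) holds for all 1 ≤ i ≤ t; the unique current-labelled vertex of s_t is the final vertex of P and P has arrival time t' ≤ t; the vertices traversed by P other than its final vertex are exactly the vertices labelled visited by s_t; and the counter h of s_t equals the number of vertices traversed by P. Then for every timestep 0 ≤ t ≤ Λ: (i) for every strict temporal path P beginning on a vertex of F_0 with arrival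 time at most t, there exists a sequence of states s_0, …, s_t corresponding to P; and (ii) for every sequence of states s_0, …, s_t with s_0 an initial state and Tr(s_{i−1}, s_i, G_i) holding for all 1 ≤ i ≤ t, there exists a strict temporal path beginning on a vertex of F_0 with arrival time at most t to which the sequence corresponds. -/

import Mathlib

/-- The labels for the Temporal Hamiltonian Path dynamic program. -/
inductive HLabel : Type where
  | visited : HLabel
  | unvisited : HLabel
  | current : HLabel
deriving DecidableEq

/-- A `(1, X)`-state for the Temporal Hamiltonian Path problem: a labelling of the
vertices together with the single counter `h`. -/
abbrev HState (V : Type) : Type := (V → HLabel) × ℤ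

variable {V : Type} [Fintype V] [DecidableEq V]

set_option linter.unusedSectionVars false
set_option maxHeartbeats 1000000

/-- The snapshot of a temporal graph `(G, lam)` at time `t`: the static graph on `V`
whose edges are the edges of `G` active at time `t`. -/
def snapshot (G : SimpleGraph V) (lam : Sym2 V → Finset ℕ) (t : ℕ) : SimpleGraph V where
  Adj u v := G.Adj u v ∧ t ∈ lam s(u, v)
  symm := by
    constructor
    rintro u v ⟨h1, h2⟩
    exact ⟨h1.symm, by rwa [Sym2.eq_swap]⟩
  loopless := ⟨fun v h => G.loopless.irrefl v h.1⟩

/-- The bag `F_t` of the VIM sequence: vertices `v` with edges `vu`, `vw` such that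
`min λ(vu) ≤ t ≤ max λ(vw)`.  (By convention `F_0 = F_1`.) -/
def vimBag (G : SimpleGraph V) (lam : Sym2 V → Finset ℕ) (t : ℕ) : Set V :=
  {v | ∃ u w, G.Adj v u ∧ G.Adj v w ∧
    (∃ t1 ∈ lam s(v, u), t1 ≤ t) ∧ (∃ t2 ∈ lam s(v, w), t ≤ t2)}

/-- The transition predicate for Temporal Hamiltonian Path: either the current vertex
moves along an edge of `G` to an unvisited vertex (the old current vertex becoming
visited, the counter increasing by one, and all other vertices keeping their labels), or
the two states are equal. -/
def hamTr (s1 s2 : HState V) (H : SimpleGraph V) : Prop :=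
  (∃ c1 c2 : V,
    {x | s1.1 x = HLabel.current} \ {x | s2.1 x = HLabel.current} = {c1} ∧
    {x | s2.1 x = HLabel.current} \ {x | s1.1 x = HLabel.current} = {c2} ∧
    H.Adj c1 c2 ∧ s1.1 c2 = HLabel.unvisited ∧ s2.2 = s1.2 + 1 ∧
    {x | s2.1 x = HLabel.visited} = {x | s1.1 x = HLabel.visited} ∪ {c1} ∧
    (∀ u : V, u ≠ c1 → u ≠ c2 → s1.1 u = s2.1 u)) ∨
  s1 = s2

/-- The initial states: for each `u ∈ F_0`, label `u` current, every other vertex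
unvisited, and set the counter to `1`. -/
def hamInit (G : SimpleGraph V) (lam : Sym2 V → Finset ℕ) : Set (HState V) :=
  {s | ∃ u ∈ vimBag G lam 1,
    s = (fun x => if x = u then HLabel.current else HLabel.unvisited, (1 : ℤ))}

/-- A strict temporal path in the temporal graph `(G, lam)`: a sequence of `len + 1`
distinct vertices, consecutive ones joined by edges of `G` active at strictly increasing
times. -/
structure TempPath (G : SimpleGraph V) (lam : Sym2 V → Finset ℕ) : Type where
  len : ℕ
  vert : Fin (len + 1) → V
  time : Fin len → ℕ
  inj : Function.Injective vert
  adj : ∀ i : Fin len, G.Adj (vert i.castSucc) (vert i.succ)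
  mem : ∀ i : Fin len, time i ∈ lam s(vert i.castSucc, vert i.succ)
  mono : StrictMono time

/-- The arrival time of a strict temporal path: the time of its last time-edge, or `0`
for a single-vertex path. -/
def TempPath.arrival {G : SimpleGraph V} {lam : Sym2 V → Finset ℕ}
    (P : TempPath G lam) : ℕ :=
  if h : 0 < P.len then P.time ⟨P.len - 1, by omega⟩ else 0

/-- The final vertex of a strict temporal path. -/
def TempPath.final {G : SimpleGraph V} {lam : Sym2 V → Finset ℕ}
    (P : TempPath G lam) : V :=
  P.vert (Fin.last P.len)

/-- The sequence of states `s 0, …, s t` corresponds to the strict temporal path `P`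
(beginning on a vertex of `F_0`): `s 0` is an initial state; the transition predicate
holds across consecutive states on the snapshots; the unique current-labelled vertex of
`s t` is the final vertex of `P`; `P` arrives by time `t`; the vertices traversed by `P`
other than its final vertex are exactly those labelled visited by `s t`; and the counter
of `s t` is the number of vertices traversed by `P`. -/
def corresponds (G : SimpleGraph V) (lam : Sym2 V → Finset ℕ)
    (s : ℕ → HState V) (P : TempPath G lam) (t : ℕ) : Prop :=
  s 0 ∈ hamInit G lam ∧
  (∀ i, 1 ≤ i → i ≤ t → hamTr (s (i - 1)) (s i) (snapshot G lam i)) ∧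
  {x | (s t).1 x = HLabel.current} = {P.final} ∧
  P.arrival ≤ t ∧
  {x | (s t).1 x = HLabel.visited} = Set.range P.vert \ {P.final} ∧
  (s t).2 = (P.len : ℤ) + 1

lemma hlabel_cases (l : HLabel) (h1 : l ≠ HLabel.current) (h2 : l ≠ HLabel.visited) :
    l = HLabel.unvisited := by cases l <;> simp_all

variable {G : SimpleGraph V} {lam : Sym2 V → Finset ℕ}

/-- The label function of the DP state after the path `P` has completed `m` edges. -/
def pathLabel (P : TempPath G lam) (m : Fin (P.len + 1)) : V → HLabel := fun x =>
  if x = P.vert m then HLabel.current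
  else if ∃ j : Fin (P.len + 1), j < m ∧ P.vert j = x then HLabel.visited
  else HLabel.unvisited

lemma pathLabel_current_iff (P : TempPath G lam) (m : Fin (P.len + 1)) (x : V) :
    pathLabel P m x = HLabel.current ↔ x = P.vert m := by
  unfold pathLabel; split_ifs <;> simp_all

lemma pathLabel_visited_iff (P : TempPath G lam) (m : Fin (P.len + 1)) (x : V) :
    pathLabel P m x = HLabel.visited ↔ ∃ j : Fin (P.len + 1), j < m ∧ P.vert j = x := by
  unfold pathLabel
  split_ifs with h1 h2
  · simp only [reduceCtorEq, false_iff]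
    rintro ⟨j, hj, hjx⟩
    rw [h1] at hjx
    exact absurd (P.inj hjx) hj.ne
  · simpa using h2
  · simpa using h2

set_option linter.unusedSectionVars false

lemma time_le_arrival (P : TempPath G lam) (j : Fin P.len) : P.time j ≤ P.arrival := by
  have hj := j.2
  rw [TempPath.arrival, dif_pos (by omega : 0 < P.len)]
  exact P.mono.monotone (by simp [Fin.le_def]; omega)

/-- A single-vertex path. -/
def singlePath (u : V) : TempPath G lam where
  len := 0
  vert := fun _ => u
  time := Fin.elim0
  inj := fun a b _ => Fin.ext (by omega)
  adj := fun i => i.elim0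
  mem := fun i => i.elim0
  mono := fun a => a.elim0

/-- Extend a path by one vertex. -/
def TempPath.extend (P : TempPath G lam) (v : V) (τ : ℕ)
    (hv : v ∉ Set.range P.vert) (hadj : G.Adj P.final v)
    (hmem : τ ∈ lam s(P.final, v)) (hτ : P.arrival < τ) : TempPath G lam where
  len := P.len + 1
  vert := Fin.snoc P.vert v
  time := Fin.snoc P.time τ
  inj := by
    intro a b hab
    induction a using Fin.lastCases with
    | last =>
      induction b using Fin.lastCases with
      | last => rfl
      | cast b' =>
        rw [Fin.snoc_last, Fin.snoc_castSucc] at hab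
        exact absurd ⟨b', hab.symm⟩ hv
    | cast a' =>
      induction b using Fin.lastCases with
      | last =>
        rw [Fin.snoc_last, Fin.snoc_castSucc] at hab
        exact absurd ⟨a', hab⟩ hv
      | cast b' =>
        rw [Fin.snoc_castSucc, Fin.snoc_castSucc] at hab
        rw [P.inj hab]
  adj := by
    intro i
    induction i using Fin.lastCases with
    | last =>
      rw [Fin.succ_last, Fin.snoc_last, Fin.snoc_castSucc]
      exact hadj
    | cast j =>
      rw [Fin.succ_castSucc, Fin.snoc_castSucc, Fin.snoc_castSucc]
      exact P.adj j
  mem := by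
    intro i
    induction i using Fin.lastCases with
    | last =>
      rw [Fin.snoc_last, Fin.succ_last, Fin.snoc_last, Fin.snoc_castSucc]
      exact hmem
    | cast j =>
      rw [Fin.succ_castSucc, Fin.snoc_castSucc, Fin.snoc_castSucc, Fin.snoc_castSucc]
      exact P.mem j
  mono := by
    rw [Fin.strictMono_iff_lt_succ]
    intro i
    rw [Fin.snoc_castSucc]
    by_cases h : (i : ℕ) + 1 < P.len
    · have : i.succ = Fin.castSucc ⟨(i : ℕ) + 1, h⟩ := Fin.ext rfl
      rw [this, Fin.snoc_castSucc]
      exact P.mono (by simp [Fin.lt_def])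
    · have : i.succ = Fin.last P.len := Fin.ext (by have := i.2; simp; omega)
      rw [this, Fin.snoc_last]
      exact (time_le_arrival P i).trans_lt hτ

section ExtendLemmas
variable (P : TempPath G lam) (v : V) (τ : ℕ)
    (hv : v ∉ Set.range P.vert) (hadj : G.Adj P.final v)
    (hmem : τ ∈ lam s(P.final, v)) (hτ : P.arrival < τ)

lemma extend_final : (P.extend v τ hv hadj hmem hτ).final = v := by
  simp only [TempPath.final, TempPath.extend]
  rw [Fin.snoc_last]

lemma extend_arrival : (P.extend v τ hv hadj hmem hτ).arrival = τ := by
  rw [TempPath.arrival, dif_pos (by simp [TempPath.extend] : 0 < (P.extend v τ hv hadj hmem hτ).len)]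
  simp only [TempPath.extend]
  have : (⟨P.len + 1 - 1, by omega⟩ : Fin (P.len + 1)) = Fin.last P.len := Fin.ext (by simp)
  rw [this, Fin.snoc_last]

lemma extend_vert_zero : (P.extend v τ hv hadj hmem hτ).vert 0 = P.vert 0 := by
  simp only [TempPath.extend]
  have : (0 : Fin (P.len + 2)) = Fin.castSucc 0 := Fin.ext rfl
  exact Fin.snoc_castSucc (α := fun _ => V) (i := 0) (p := P.vert) (x := v)

lemma extend_range : Set.range (P.extend v τ hv hadj hmem hτ).vert
    = Set.range P.vert ∪ {v} := by
  simp only [TempPath.extend]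
  ext x
  constructor
  · rintro ⟨i, rfl⟩
    induction i using Fin.lastCases with
    | last => rw [Fin.snoc_last]; exact Or.inr rfl
    | cast j => rw [Fin.snoc_castSucc]; exact Or.inl ⟨j, rfl⟩
  · rintro (⟨i, rfl⟩ | rfl)
    · exact ⟨i.castSucc, by simp⟩
    · exact ⟨Fin.last _, by simp⟩

end ExtendLemmas



/-- Number of edges of `P` completed by time `i`. -/
def kcount (P : TempPath G lam) (i : ℕ) : ℕ :=
  (Finset.univ.filter (fun j : Fin P.len => P.time j ≤ i)).card

lemma kcount_le (P : TempPath G lam) (i : ℕ) : kcount P i ≤ P.len := by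
  calc kcount P i ≤ Finset.univ.card := Finset.card_filter_le _ _
  _ = P.len := by simp

/-- The DP state sequence associated with the path `P`. -/
def pstate (P : TempPath G lam) (i : ℕ) : HState V :=
  (pathLabel P ⟨kcount P i, Nat.lt_succ_of_le (kcount_le P i)⟩, (kcount P i : ℤ) + 1)

lemma kcount_zero (P : TempPath G lam) (h1 : ∀ j, 1 ≤ P.time j) : kcount P 0 = 0 := by
  rw [kcount, Finset.card_eq_zero, Finset.filter_eq_empty_iff]
  intro j _
  have := h1 j
  omega

lemma kcount_full (P : TempPath G lam) (i : ℕ) (h : ∀ j, P.time j ≤ i) :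
    kcount P i = P.len := by
  rw [kcount, Finset.filter_true_of_mem (fun j _ => h j)]
  simp

lemma kcount_time (P : TempPath G lam) (j : Fin P.len) :
    kcount P (P.time j) = (j : ℕ) + 1 := by
  rw [kcount]
  have : Finset.univ.filter (fun j' : Fin P.len => P.time j' ≤ P.time j) = Finset.Iic j := by
    ext j'
    simp [P.mono.le_iff_le]
  rw [this, Fin.card_Iic]

lemma kcount_time_pred (P : TempPath G lam) (j : Fin P.len) (h1 : ∀ j', 1 ≤ P.time j') :
    kcount P (P.time j - 1) = (j : ℕ) := by
  rw [kcount]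
  have : Finset.univ.filter (fun j' : Fin P.len => P.time j' ≤ P.time j - 1) = Finset.Iio j := by
    ext j'
    simp only [Finset.mem_filter, Finset.mem_univ, true_and, Finset.mem_Iio]
    rw [← P.mono.lt_iff_lt]
    have := h1 j
    omega
  rw [this, Fin.card_Iio]

lemma kcount_stable (P : TempPath G lam) (i : ℕ) (hi : 1 ≤ i)
    (h : ∀ j, P.time j ≠ i) : kcount P i = kcount P (i - 1) := by
  rw [kcount, kcount]
  congr 1
  ext j
  simp only [Finset.mem_filter, Finset.mem_univ, true_and]
  have := h j
  omega

lemma pathLabel_current_set (P : TempPath G lam) (m : Fin (P.len + 1)) :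
    {x | pathLabel P m x = HLabel.current} = {P.vert m} := by
  ext x
  simp [pathLabel_current_iff]

lemma pathLabel_zero (P : TempPath G lam) (m : Fin (P.len + 1)) (hm : (m : ℕ) = 0) :
    pathLabel P m = fun x => if x = P.vert m then HLabel.current else HLabel.unvisited := by
  funext x
  rw [pathLabel]
  rcases eq_or_ne x (P.vert m) with h | h
  · rw [if_pos h, if_pos h]
  · rw [if_neg h, if_neg h, if_neg]
    rintro ⟨j, hj, -⟩
    rw [Fin.lt_def, hm] at hj
    omega

lemma pathLabel_visited_last (P : TempPath G lam) :
    {x | pathLabel P (Fin.last P.len) x = HLabel.visited}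
      = Set.range P.vert \ {P.final} := by
  ext x
  rw [Set.mem_setOf_eq, pathLabel_visited_iff]
  constructor
  · rintro ⟨j, hj, rfl⟩
    refine ⟨⟨j, rfl⟩, fun hf => ?_⟩
    rw [Set.mem_singleton_iff] at hf
    exact absurd (P.inj hf) hj.ne
  · rintro ⟨⟨j, rfl⟩, hf⟩
    refine ⟨j, ?_, rfl⟩
    rw [Fin.lt_def, Fin.val_last]
    have hjne : j ≠ Fin.last P.len := fun h => hf (by rw [h]; rfl)
    have := j.2
    rcases Nat.lt_or_ge (j : ℕ) P.len with h | h
    · exact h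
    · exact absurd (Fin.ext (by rw [Fin.val_last]; omega) : j = Fin.last P.len) hjne


lemma singleton_diff {a b : V} (h : a ≠ b) : ({a} : Set V) \ {b} = {a} := by
  ext x
  simp only [Set.mem_diff, Set.mem_singleton_iff]
  constructor
  · rintro ⟨hx, -⟩; exact hx
  · rintro rfl; exact ⟨rfl, h⟩

lemma pstate_congr (P : TempPath G lam) (i1 i2 : ℕ) (h : kcount P i1 = kcount P i2) :
    pstate P i1 = pstate P i2 := by
  unfold pstate
  have e : (⟨kcount P i1, Nat.lt_succ_of_le (kcount_le P i1)⟩ : Fin (P.len + 1))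
      = ⟨kcount P i2, Nat.lt_succ_of_le (kcount_le P i2)⟩ := Fin.ext h
  rw [e, h]

lemma pstate_tr (P : TempPath G lam) (h1 : ∀ j', 1 ≤ P.time j') (i : ℕ) (hi : 1 ≤ i) :
    hamTr (pstate P (i - 1)) (pstate P i) (snapshot G lam i) := by
  by_cases hex : ∃ j, P.time j = i
  · obtain ⟨j, hij⟩ := hex
    left
    have hk1 : kcount P (i - 1) = (j : ℕ) := by rw [← hij]; exact kcount_time_pred P j h1
    have hk2 : kcount P i = (j : ℕ) + 1 := by rw [← hij]; exact kcount_time P j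
    have e1 : (⟨kcount P (i - 1), Nat.lt_succ_of_le (kcount_le P (i - 1))⟩ : Fin (P.len + 1))
        = j.castSucc := Fin.ext (by simpa using hk1)
    have e2 : (⟨kcount P i, Nat.lt_succ_of_le (kcount_le P i)⟩ : Fin (P.len + 1))
        = j.succ := Fin.ext (by simpa using hk2)
    have hne : P.vert j.castSucc ≠ P.vert j.succ := by
      intro h
      exact absurd (P.inj h) (Fin.castSucc_lt_succ (i := j)).ne
    refine ⟨P.vert j.castSucc, P.vert j.succ, ?_, ?_, ?_, ?_, ?_, ?_, ?_⟩
    · show {x | (pstate P (i-1)).1 x = HLabel.current} \ {x | (pstate P i).1 x = HLabel.current} = _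
      unfold pstate
      rw [e1, e2, pathLabel_current_set, pathLabel_current_set]
      exact singleton_diff hne
    · unfold pstate
      rw [e1, e2, pathLabel_current_set, pathLabel_current_set]
      exact singleton_diff hne.symm
    · refine ⟨P.adj j, ?_⟩
      rw [← hij]
      exact P.mem j
    · show (pstate P (i-1)).1 (P.vert j.succ) = HLabel.unvisited
      unfold pstate
      dsimp only
      rw [e1]
      apply hlabel_cases
      · intro h
        rw [pathLabel_current_iff] at h
        exact hne.symm h
      · intro h
        rw [pathLabel_visited_iff] at h
        obtain ⟨j', hlt, hj'⟩ := h
        rw [P.inj hj'] at hlt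
        rw [Fin.lt_def, Fin.val_succ, Fin.coe_castSucc] at hlt
        omega
    · show ((kcount P i : ℤ) + 1) = ((kcount P (i - 1) : ℤ) + 1) + 1
      rw [hk1, hk2]
      push_cast
      ring
    · unfold pstate
      rw [e1, e2]
      ext x
      simp only [Set.mem_setOf_eq, Set.mem_union, Set.mem_singleton_iff,
        pathLabel_visited_iff]
      constructor
      · rintro ⟨j', hlt, rfl⟩
        rw [Fin.lt_def, Fin.val_succ] at hlt
        rcases Nat.lt_or_ge (j' : ℕ) (j : ℕ) with h | h
        · exact Or.inl ⟨j', by rw [Fin.lt_def, Fin.coe_castSucc]; exact h, rfl⟩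
        · have : j' = j.castSucc := Fin.ext (by rw [Fin.coe_castSucc]; omega)
          exact Or.inr (by rw [this])
      · rintro (⟨j', hlt, rfl⟩ | rfl)
        · refine ⟨j', ?_, rfl⟩
          rw [Fin.lt_def, Fin.coe_castSucc] at hlt
          rw [Fin.lt_def, Fin.val_succ]
          omega
        · exact ⟨j.castSucc, Fin.castSucc_lt_succ (i := j), rfl⟩
    · intro u hu1 hu2
      unfold pstate
      dsimp only
      rw [e1, e2]
      simp only [pathLabel]
      rw [if_neg hu1, if_neg hu2]
      by_cases hv : ∃ j' : Fin (P.len + 1), j' < j.castSucc ∧ P.vert j' = u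
      · obtain ⟨j', hlt, hj'⟩ := hv
        rw [if_pos ⟨j', hlt, hj'⟩, if_pos ⟨j', hlt.trans (Fin.castSucc_lt_succ (i := j)), hj'⟩]
      · rw [if_neg hv, if_neg]
        rintro ⟨j', hlt, rfl⟩
        rw [Fin.lt_def, Fin.val_succ] at hlt
        rcases Nat.lt_or_ge (j' : ℕ) (j : ℕ) with h | h
        · exact hv ⟨j', by rw [Fin.lt_def, Fin.coe_castSucc]; exact h, rfl⟩
        · have : j' = j.castSucc := Fin.ext (by rw [Fin.coe_castSucc]; omega)
          exact hu1 (by rw [this])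
  · push_neg at hex
    right
    exact pstate_congr P (i - 1) i (kcount_stable P i hi hex).symm


lemma dirTwo (G : SimpleGraph V) (lam : Sym2 V → Finset ℕ) (t : ℕ) :
    ∀ s : ℕ → HState V, s 0 ∈ hamInit G lam →
      (∀ i, 1 ≤ i → i ≤ t → hamTr (s (i - 1)) (s i) (snapshot G lam i)) →
      ∃ P : TempPath G lam, P.vert 0 ∈ vimBag G lam 1 ∧ corresponds G lam s P t := by
  induction t with
  | zero =>
    intro s hs0 _
    obtain ⟨u, hu, hform⟩ := hs0
    refine ⟨singlePath u, hu, ⟨u, hu, hform⟩, by omega, ?_, ?_, ?_, ?_⟩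
    · rw [hform]
      show {x | (if x = u then HLabel.current else HLabel.unvisited) = HLabel.current} = {u}
      ext x
      simp only [Set.mem_setOf_eq, Set.mem_singleton_iff]
      constructor
      · intro h
        by_contra hx
        rw [if_neg hx] at h
        exact absurd h (by simp)
      · intro h
        rw [if_pos h]
    · rw [TempPath.arrival, dif_neg (by simp [singlePath])]
    · rw [hform]
      ext x
      simp only [Set.mem_setOf_eq]
      constructor
      · intro h
        split_ifs at h <;> simp_all
      · rintro ⟨⟨i, rfl⟩, h2⟩
        exact absurd rfl h2
    · rw [hform]
      simp [singlePath]
  | succ t ih =>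
    intro s hs0 htr
    obtain ⟨P, hP0, hinit, htrans, hcur, harr, hvis, hcnt⟩ :=
      ih s hs0 (fun i h1 h2 => htr i h1 (h2.trans (by omega)))
    have htt : t + 1 - 1 = t := rfl
    have htr' := htr (t + 1) (by omega) le_rfl
    rw [htt] at htr'
    rcases htr' with ⟨c1, c2, hd1, hd2, hadj, hunv, hh, hvis2, _⟩ | heq
    · -- nontrivial transition
      have hc1mem : c1 ∈ ({P.final} : Set V) \ {x | (s (t + 1)).1 x = HLabel.current} := by
        rw [← hcur, hd1]; rfl
      obtain ⟨hc1f, hc1nc⟩ := hc1mem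
      rw [Set.mem_singleton_iff] at hc1f
      have hc2mem : c2 ∈ {x | (s (t + 1)).1 x = HLabel.current} \ ({P.final} : Set V) := by
        rw [← hcur, hd2]; rfl
      obtain ⟨hc2c, hc2nf⟩ := hc2mem
      have hC : {x | (s (t + 1)).1 x = HLabel.current} = {c2} := by
        ext x
        simp only [Set.mem_setOf_eq, Set.mem_singleton_iff]
        constructor
        · intro hx
          by_cases hxf : x = P.final
          · exact absurd hx (by rw [hxf]; rw [hc1f] at hc1nc; exact hc1nc)
          · have : x ∈ {x | (s (t + 1)).1 x = HLabel.current} \ {x | (s t).1 x = HLabel.current} := by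
              rw [hcur]; exact ⟨hx, hxf⟩
            rw [hd2] at this
            exact this
        · intro hx; rw [hx]; exact hc2c
      have hc2nr : c2 ∉ Set.range P.vert := by
        intro hr
        have : c2 ∈ Set.range P.vert \ {P.final} := ⟨hr, hc2nf⟩
        rw [← hvis] at this
        simp only [Set.mem_setOf_eq, hunv] at this
        exact absurd this (by simp)
      have hGadj : G.Adj P.final c2 := by rw [← hc1f]; exact hadj.1
      have hmem2 : t + 1 ∈ lam s(P.final, c2) := by rw [← hc1f]; exact hadj.2
      have harr' : P.arrival < t + 1 := by omega
      refine ⟨P.extend c2 (t + 1) hc2nr hGadj hmem2 harr', ?_, hs0, htr, ?_, ?_, ?_, ?_⟩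
      · rw [extend_vert_zero]; exact hP0
      · rw [hC, extend_final]
      · rw [extend_arrival]
      · rw [hvis2, hvis, extend_range, extend_final, hc1f]
        ext x
        simp only [Set.mem_union, Set.mem_diff, Set.mem_singleton_iff]
        constructor
        · rintro (⟨hr, _⟩ | rfl)
          · exact ⟨Or.inl hr, fun hx => hc2nr (hx ▸ hr)⟩
          · exact ⟨Or.inl ⟨Fin.last _, rfl⟩, fun hx => hc2nf hx.symm⟩
        · rintro ⟨hr | rfl, hne⟩
          · by_cases hxf : x = P.final
            · exact Or.inr hxf
            · exact Or.inl ⟨hr, hxf⟩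
          · exact absurd rfl hne
      · show (s (t + 1)).2 = ((P.len + 1 : ℕ) : ℤ) + 1
        rw [hh, hcnt]
        push_cast
        ring
    · -- trivial transition
      refine ⟨P, hP0, hs0, htr, ?_, by omega, ?_, ?_⟩ <;> rw [← heq]
      · exact hcur
      · exact hvis
      · exact hcnt

/-- For every timestep `0 ≤ t ≤ Λ`: (i) every strict temporal path
beginning on a vertex of `F_0` with arrival time at most `t` has a corresponding sequence
of states `s 0, …, s t`; and (ii) every sequence of states `s 0, …, s t` starting from an
initial state and linked by the transition predicate corresponds to some strict temporal
path beginning on a vertex of `F_0` with arrival time at most `t`. -/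
theorem stmt_18 (G : SimpleGraph V) (lam : Sym2 V → Finset ℕ) (Λ : ℕ)
    (hne : ∀ e ∈ G.edgeSet, (lam e).Nonempty)
    (hempty : ∀ e, e ∉ G.edgeSet → lam e = ∅)
    (hbdd : ∀ e, ∀ t ∈ lam e, 1 ≤ t ∧ t ≤ Λ)
    (hlife : ∃ e ∈ G.edgeSet, Λ ∈ lam e)
    (t : ℕ) (ht : t ≤ Λ) :
    (∀ P : TempPath G lam, P.vert 0 ∈ vimBag G lam 1 → P.arrival ≤ t →
      ∃ s : ℕ → HState V, corresponds G lam s P t) ∧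
    (∀ s : ℕ → HState V, s 0 ∈ hamInit G lam →
      (∀ i, 1 ≤ i → i ≤ t → hamTr (s (i - 1)) (s i) (snapshot G lam i)) →
      ∃ P : TempPath G lam, P.vert 0 ∈ vimBag G lam 1 ∧ corresponds G lam s P t) := by
  constructor
  · intro P hP0 hParr
    have h1 : ∀ j : Fin P.len, 1 ≤ P.time j := fun j => (hbdd _ _ (P.mem j)).1
    have hklast : kcount P t = P.len :=
      kcount_full P t (fun j => (time_le_arrival P j).trans hParr)
    have elast : (⟨kcount P t, Nat.lt_succ_of_le (kcount_le P t)⟩ : Fin (P.len + 1))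
        = Fin.last P.len := Fin.ext (by simpa using hklast)
    refine ⟨pstate P, ?_, fun i hi1 _ => pstate_tr P h1 i hi1, ?_, hParr, ?_, ?_⟩
    · refine ⟨P.vert 0, hP0, ?_⟩
      unfold pstate
      have e0 : (⟨kcount P 0, Nat.lt_succ_of_le (kcount_le P 0)⟩ : Fin (P.len + 1))
          = 0 := Fin.ext (by simpa using kcount_zero P h1)
      rw [e0, pathLabel_zero P 0 rfl, kcount_zero P h1]
      norm_num
    · show {x | (pstate P t).1 x = HLabel.current} = {P.final}
      unfold pstate
      dsimp only
      rw [elast, pathLabel_current_set]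
      rfl
    · show {x | (pstate P t).1 x = HLabel.visited} = _
      unfold pstate
      dsimp only
      rw [elast, pathLabel_visited_last]
    · show (kcount P t : ℤ) + 1 = (P.len : ℤ) + 1
      rw [hklast]
  · intro s hs0 htr
    exact dirTwo G lam t s hs0 htr
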